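/- arXiv:0807.1461 — 6 statements merged into one kernel-verified Lean document; each statement's English description precedes it below -/
import Mathlib

section
/- For any finite colouring of ℕ and any k ∈ ℕ there exist a, b, d ∈ ℕ such that the set {b·(a + i·d)^j : i, j ∈ {1, …, k}} is monochromatic. -/
/-! Let `ι` be a Hales–Jewett dimension for `k + 1` letters and `r` colours, and colour each
`x : ι → ℕ` by the colouring `e ↦ c (∏ t, (x t + 1) ^ e t)` of exponent patterns
`e : ι → Fin (k + 1)`. Gallai's theorem gives a homothetic copy `a • S + y` of the box
`S = {0, …, k}^ι` on which this colouring of patterns is constant, and Hales–Jewett gives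
a monochromatic combinatorial line of patterns for it. Along the line all active coordinates carry
the same exponent `j`, so the product factors as `b * P ^ j`; moving `x` to
`a • Pi.single t₀ i + y` for an active coordinate `t₀` makes `P` an arithmetic progression
in `i`.
-/

open Combinatorics Finset

namespace Combinatorics.Line

variable {α ι : Type*} [Fintype ι]

theorem prod_pow_apply {M : Type*} [CommMonoid M] (l : Line α ι) (e : α → ℕ) (x : ι → M)
    (z : α) :
    ∏ t, x t ^ e (l z t) =
      (∏ t with (l.idxFun t).isNone, x t) ^ e z * ∏ t, x t ^ (l.idxFun t).elim 0 e := by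
  rw [← prod_pow, prod_filter, ← prod_mul_distrib]
  refine prod_congr rfl fun t _ => ?_
  cases h : l.idxFun t <;> simp [h]

theorem exists_prod_pow_apply_smul_single_add [DecidableEq ι] (l : Line α ι) (e : α → ℕ)
    {t₀ : ι} (ht₀ : l.idxFun t₀ = none) (a : ℕ) (y : ι → ℕ) :
    ∃ b m, 0 < b ∧ 0 < m ∧ ∀ (i : ℕ) (z : α),
      ∏ t, ((a • Pi.single t₀ i + y : ι → ℕ) t + 1) ^ e (l z t) =
        b * (m * (y t₀ + 1) + i * (m * a)) ^ e z := by
  set m := ∏ t ∈ ({t | (l.idxFun t).isNone} : Finset ι).erase t₀, (y t + 1)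
  refine ⟨∏ t, (y t + 1) ^ (l.idxFun t).elim 0 e, m, by positivity, by positivity,
    fun i z => ?_⟩
  have hmem : t₀ ∈ ({t | (l.idxFun t).isNone} : Finset ι) := by simp [ht₀]
  have hactive : ∏ t with (l.idxFun t).isNone, ((a • Pi.single t₀ i + y : ι → ℕ) t + 1) =
      m * (y t₀ + 1) + i * (m * a) := by
    rw [← mul_prod_erase _ _ hmem,
      prod_congr rfl (g := fun t => y t + 1) fun t ht => by simp [ne_of_mem_erase ht]]
    simp only [Pi.add_apply, Pi.smul_apply, Pi.single_eq_same, smul_eq_mul]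
    ring
  have hfixed : ∏ t, ((a • Pi.single t₀ i + y : ι → ℕ) t + 1) ^ (l.idxFun t).elim 0 e =
      ∏ t, (y t + 1) ^ (l.idxFun t).elim 0 e := by
    refine prod_congr rfl fun t _ => ?_
    rcases eq_or_ne t t₀ with rfl | ht
    · simp [ht₀]
    · simp [ht]
  rw [prod_pow_apply, hactive, hfixed, mul_comm]

end Combinatorics.Line

/-- Bergelson's partition theorem: for any finite colouring of the positive
integers and any `k`, there are `a, b, d` such that
`{b·(a+i·d)^j : i, j ∈ {1,…,k}}` is monochromatic. -/
theorem bergelson_partition (k r : ℕ) (c : ℕ → Fin r) :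
    ∃ a b d : ℕ, 0 < a ∧ 0 < b ∧ 0 < d ∧ ∃ col : Fin r,
      ∀ i j : ℕ, 1 ≤ i → i ≤ k → 1 ≤ j → j ≤ k →
        c (b * (a + i * d) ^ j) = col := by
  classical
  obtain ⟨ι, _, hHJ⟩ := Line.exists_mono_in_high_dimension (Fin (k + 1)) (Fin r)
  obtain ⟨a, ha, y, C, hC⟩ := exists_mono_homothetic_copy
    (Fintype.piFinset fun _ : ι => range (k + 1))
    (fun x (e : ι → Fin (k + 1)) => c (∏ t, (x t + 1) ^ (e t : ℕ)))
  obtain ⟨l, γ, hl⟩ := hHJ C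
  obtain ⟨t₀, ht₀⟩ := l.proper
  obtain ⟨b, m, hb, hm, hprod⟩ :=
    l.exists_prod_pow_apply_smul_single_add (fun j => (j : ℕ)) ht₀ a y
  refine ⟨m * (y t₀ + 1), b, m * a, by positivity, hb, by positivity, γ,
    fun i j _ hik _ hjk => ?_⟩
  have hs : Pi.single t₀ i ∈ Fintype.piFinset fun _ : ι => range (k + 1) := by
    simp only [Fintype.mem_piFinset, mem_range, Pi.single_apply]
    intro t
    split <;> omega
  have hcolour := (congrFun (hC _ hs) (l ⟨j, by omega⟩)).trans (hl _)
  simp only [hprod] at hcolour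
  exact hcolour
end

section
/- Let (S, ·) be an adequate partial semigroup, let 𝓕 be an adequately partition regular invariant family of finite subsets of S, and let A ⊂ S be piecewise syndetic. Then there exists F ∈ 𝓕 with F ⊂ A. -/
open Set

/-- A partial semigroup: a partially defined associative operation, encoded with
`Option`. Associativity: if either side of `x·(y·z) = (x·y)·z` is defined, so is
the other and they agree. -/
structure PartialSemigroup (S : Type*) where
  op : S → S → Option S
  assoc : ∀ x y z : S,
    (op x y).bind (fun w => op w z) = (op y z).bind (fun w => op x w)

namespace PartialSemigroup

variable {S : Type*} (P : PartialSemigroup S)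

/-- `φ(x) = {y : x·y is defined}`. -/
def phi (x : S) : Set S := {y | (P.op x y).isSome}

/-- `S` is adequate if `⋂_{x ∈ F} φ(x) ≠ ∅` for every finite nonempty `F`. -/
def Adequate : Prop :=
  ∀ F : Finset S, F.Nonempty → (⋂ x ∈ F, P.phi x).Nonempty

/-- `x⁻¹A = {y ∈ φ(x) : x·y ∈ A}`. -/
def invImg (x : S) (A : Set S) : Set S := {y | ∃ z ∈ A, P.op x y = some z}

/-- The sets of the ultrafilter product `p·q = {A : {x : x⁻¹A ∈ q} ∈ p}`. -/
def mulSets (p q : Ultrafilter S) : Set (Set S) :=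
  {A | {x | P.invImg x A ∈ q} ∈ p}

/-- `δS ⊆ βS`: ultrafilters containing every `φ(x)`. -/
def delta : Set (Ultrafilter S) := {p | ∀ x : S, P.phi x ∈ p}

/-- `r` is the product `p·q` in `δS`. -/
def IsProd (p q r : Ultrafilter S) : Prop := ∀ A : Set S, A ∈ r ↔ A ∈ P.mulSets p q

/-- A two-sided ideal of the compact right topological semigroup `δS`. -/
def IsIdeal (I : Set (Ultrafilter S)) : Prop :=
  I ⊆ P.delta ∧ I.Nonempty ∧
    (∀ p ∈ P.delta, ∀ q ∈ I, ∀ r : Ultrafilter S, P.IsProd p q r → r ∈ I) ∧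
    (∀ p ∈ P.delta, ∀ q ∈ I, ∀ r : Ultrafilter S, P.IsProd q p r → r ∈ I)

/-- Membership in the smallest two-sided ideal `K(δS)` (which equals the
intersection of all two-sided ideals). -/
def InSmallestIdeal (p : Ultrafilter S) : Prop :=
  p ∈ P.delta ∧ ∀ I : Set (Ultrafilter S), P.IsIdeal I → p ∈ I

/-- `A` is piecewise syndetic: `A` belongs to some ultrafilter in `K(δS)`. -/
def PiecewiseSyndetic (A : Set S) : Prop :=
  ∃ p : Ultrafilter S, P.InSmallestIdeal p ∧ A ∈ p

/-- `𝓕` is invariant under all defined left and right translations. -/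
def Invariant (𝓕 : Set (Set S)) : Prop :=
  (∀ s : S, ∀ F ∈ 𝓕, (∀ f ∈ F, (P.op s f).isSome) →
      {z | ∃ f ∈ F, P.op s f = some z} ∈ 𝓕) ∧
  (∀ s : S, ∀ F ∈ 𝓕, (∀ f ∈ F, (P.op f s).isSome) →
      {z | ∃ f ∈ F, P.op f s = some z} ∈ 𝓕)

/-- `𝓕` is adequately partition regular: every finite partition (colouring) of
any set `⋂_{x ∈ G} φ(x)` (`G` finite) has a cell containing a member of `𝓕`. -/
def AdequatelyPartitionRegular (𝓕 : Set (Set S)) : Prop :=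
  ∀ G : Finset S, ∀ (r : ℕ) (c : S → Fin r),
    ∃ F ∈ 𝓕, F ⊆ (⋂ x ∈ G, P.phi x) ∧ ∃ i : Fin r, ∀ y ∈ F, c y = i

/-!
The ultrafilters of `δS` all of whose members contain a member of `𝓕` form a two-sided ideal:
a left product `p·q` inherits the property from `q` by invariance under left translation, and
in a right product `q·p` a member `F` of `𝓕` is finite, so its elements have a common right
translate `s` into the target set, and `F·s ∈ 𝓕`. Adequate partition regularity makes this
ideal nonempty, so it contains `K(δS)`, and hence every piecewise syndetic set contains a
member of `𝓕`.
-/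

def upperClosureUltrafilters (𝓕 : Set (Set S)) : Set (Ultrafilter S) :=
  {r | r ∈ P.delta ∧ ∀ B ∈ r, B ∈ upperClosure 𝓕}

theorem isSome_of_mem_invImg {x y : S} {B : Set S} (h : y ∈ P.invImg x B) :
    (P.op x y).isSome := by
  obtain ⟨z, -, hz⟩ := h
  simp [hz]

theorem mem_of_mem_invImg {x y z : S} {B : Set S} (h : y ∈ P.invImg x B)
    (hz : P.op x y = some z) : z ∈ B := by
  obtain ⟨z', hz', hxy⟩ := h
  rwa [Option.some_injective _ (hz.symm.trans hxy)]

theorem mem_delta_of_isProd {p q r : Ultrafilter S} (hp : p ∈ P.delta) (hq : q ∈ P.delta)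
    (hr : P.IsProd p q r) : r ∈ P.delta := by
  intro x
  refine (hr _).2 (Filter.mem_of_superset (hp x) fun y hxy => ?_)
  obtain ⟨w, hw⟩ := Option.isSome_iff_exists.mp hxy
  refine Filter.mem_of_superset (hq w) fun z hwz => ?_
  obtain ⟨u, hu⟩ := Option.isSome_iff_exists.mp hwz
  -- associativity: `(x·y)·z` is defined, hence so are `y·z` and `x·(y·z)`
  have hassoc := P.assoc x y z
  rw [hw, Option.bind_some, hu] at hassoc
  obtain ⟨v, hyz, hxv⟩ := Option.bind_eq_some_iff.mp hassoc.symm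
  exact ⟨v, Option.isSome_iff_exists.mpr ⟨u, hxv⟩, hyz⟩

section PartitionRegular

open Filter

variable {P} {𝓕 : Set (Set S)}

theorem AdequatelyPartitionRegular.exists_monochromatic
    (hpr : P.AdequatelyPartitionRegular 𝓕) {ι : Type*} [Finite ι] (G : Finset S) (c : S → ι) :
    ∃ F ∈ 𝓕, F ⊆ (⋂ x ∈ G, P.phi x) ∧ ∃ i, ∀ y ∈ F, c y = i := by
  obtain ⟨r, ⟨e⟩⟩ := Finite.exists_equiv_fin ι
  obtain ⟨F, hF, hFG, i, hi⟩ := hpr G r (e ∘ c)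
  exact ⟨F, hF, hFG, e.symm i, fun y hy => e.eq_symm_apply.mpr (hi y hy)⟩

/-- Colour `y` by the set of those `C ∈ 𝒞` containing it: a monochromatic member of `𝓕`
cannot meet any `C`, since it would then lie inside `C`. -/
theorem AdequatelyPartitionRegular.exists_mem_subset_biInter_diff
    (hpr : P.AdequatelyPartitionRegular 𝓕) (G : Finset S) {𝒞 : Set (Set S)} (h𝒞 : 𝒞.Finite)
    (hfree : ∀ C ∈ 𝒞, C ∉ upperClosure 𝓕) :
    ∃ F ∈ 𝓕, F ⊆ (⋂ x ∈ G, P.phi x) ∩ ⋂ C ∈ 𝒞, Cᶜ := by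
  have := h𝒞.to_subtype
  obtain ⟨F, hF, hFG, i, hi⟩ := hpr.exists_monochromatic G fun y (C : 𝒞) => y ∈ (C : Set S)
  refine ⟨F, hF, subset_inter hFG fun y hy => mem_iInter₂.mpr fun C hC hyC => ?_⟩
  have hFC : F ⊆ C := fun y' hy' => by
    have hiC : i ⟨C, hC⟩ := hi y hy ▸ hyC
    rwa [← hi y' hy'] at hiC
  exact hfree C hC (mem_upperClosure.mpr ⟨F, hF, hFC⟩)

/-- The sets `φ(x)` and the complements of the sets containing no member of `𝓕` have the finite
intersection property. -/
theorem AdequatelyPartitionRegular.upperClosureUltrafilters_nonempty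
    (hpr : P.AdequatelyPartitionRegular 𝓕) (hempty : ∅ ∉ 𝓕) :
    (P.upperClosureUltrafilters 𝓕).Nonempty := by
  let 𝓛 : Filter S := (⨅ x, 𝓟 (P.phi x)) ⊓ ⨅ C : {C : Set S // C ∉ upperClosure 𝓕}, 𝓟 (C : Set S)ᶜ
  have hbasis : 𝓛.HasBasis _ _ := (hasBasis_iInf_principal_finite P.phi).inf
    (hasBasis_iInf_principal_finite fun C : {C : Set S // C ∉ upperClosure 𝓕} => (C : Set S)ᶜ)
  have : 𝓛.NeBot := hbasis.neBot_iff.mpr fun {t} ⟨hG, h𝒞⟩ => by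
    obtain ⟨F, hF, hFsub⟩ := hpr.exists_mem_subset_biInter_diff hG.toFinset (h𝒞.image (↑))
      (by rintro _ ⟨C, -, rfl⟩; exact C.2)
    obtain ⟨y, hy⟩ := nonempty_iff_ne_empty.mpr (ne_of_mem_of_not_mem hF hempty)
    refine ⟨y, ?_⟩
    simpa using hFsub hy
  refine ⟨Ultrafilter.of 𝓛, fun x => Ultrafilter.of_le 𝓛 (mem_inf_of_left (mem_iInf_of_mem x
    (mem_principal_self _))), fun B hB => ?_⟩
  by_contra hfree
  have hBc : Bᶜ ∈ Ultrafilter.of 𝓛 :=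
    Ultrafilter.of_le 𝓛 (mem_inf_of_right (mem_iInf_of_mem ⟨B, hfree⟩ (mem_principal_self _)))
  exact (Ultrafilter.of 𝓛).empty_notMem (by simpa using inter_mem hB hBc)

end PartitionRegular

section Ideal

variable {P} {𝓕 : Set (Set S)}

theorem Invariant.isProd_mem_upperClosureUltrafilters_left (hinv : P.Invariant 𝓕)
    {p q r : Ultrafilter S} (hp : p ∈ P.delta) (hq : q ∈ P.upperClosureUltrafilters 𝓕)
    (hr : P.IsProd p q r) : r ∈ P.upperClosureUltrafilters 𝓕 := by
  refine ⟨P.mem_delta_of_isProd hp hq.1 hr, fun B hB => ?_⟩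
  obtain ⟨x, hx⟩ := Ultrafilter.nonempty_of_mem ((hr B).mp hB)
  obtain ⟨F, hF, hFB⟩ := mem_upperClosure.mp (hq.2 _ hx)
  refine mem_upperClosure.mpr ⟨_, hinv.1 x F hF fun f hf => P.isSome_of_mem_invImg (hFB hf), ?_⟩
  rintro z ⟨f, hf, hfz⟩
  exact P.mem_of_mem_invImg (hFB hf) hfz

theorem Invariant.isProd_mem_upperClosureUltrafilters_right (hinv : P.Invariant 𝓕)
    (hfin : ∀ F ∈ 𝓕, F.Finite) {p q r : Ultrafilter S} (hp : p ∈ P.delta)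
    (hq : q ∈ P.upperClosureUltrafilters 𝓕) (hr : P.IsProd q p r) :
    r ∈ P.upperClosureUltrafilters 𝓕 := by
  refine ⟨P.mem_delta_of_isProd hq.1 hp hr, fun B hB => ?_⟩
  obtain ⟨F, hF, hFB⟩ := mem_upperClosure.mp (hq.2 _ ((hr B).mp hB))
  obtain ⟨s, hs⟩ := Ultrafilter.nonempty_of_mem
    ((Filter.biInter_mem (hfin F hF)).mpr fun f hf => hFB hf : (⋂ f ∈ F, P.invImg f B) ∈ p)
  rw [mem_iInter₂] at hs
  refine mem_upperClosure.mpr ⟨_, hinv.2 s F hF fun f hf => P.isSome_of_mem_invImg (hs f hf), ?_⟩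
  rintro z ⟨f, hf, hfz⟩
  exact P.mem_of_mem_invImg (hs f hf) hfz

theorem Invariant.isIdeal_upperClosureUltrafilters (hinv : P.Invariant 𝓕)
    (hfin : ∀ F ∈ 𝓕, F.Finite) (hne : (P.upperClosureUltrafilters 𝓕).Nonempty) :
    P.IsIdeal (P.upperClosureUltrafilters 𝓕) :=
  ⟨fun _ hr => hr.1, hne, fun _ hp _ hq _ => hinv.isProd_mem_upperClosureUltrafilters_left hp hq,
    fun _ hp _ hq _ => hinv.isProd_mem_upperClosureUltrafilters_right hfin hp hq⟩

end Ideal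

end PartialSemigroup

theorem piecewise_syndetic_contains_member_general {S : Type*} (P : PartialSemigroup S)
    (𝓕 : Set (Set S)) (hfin : ∀ F ∈ 𝓕, F.Finite)
    (hinv : P.Invariant 𝓕) (hpr : P.AdequatelyPartitionRegular 𝓕)
    (A : Set S) (hA : P.PiecewiseSyndetic A) :
    ∃ F ∈ 𝓕, F ⊆ A := by
  by_cases hempty : ∅ ∈ 𝓕
  · exact ⟨∅, hempty, empty_subset A⟩
  have hideal := hinv.isIdeal_upperClosureUltrafilters hfin
    (hpr.upperClosureUltrafilters_nonempty hempty)
  obtain ⟨p, ⟨-, hpK⟩, hpA⟩ := hA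
  exact mem_upperClosure.mp ((hpK _ hideal).2 A hpA)

/-- Lemma 3.1: in an adequate partial semigroup, every piecewise syndetic set
contains a member of any adequately partition regular invariant family of
finite subsets. -/
theorem piecewise_syndetic_contains_member {S : Type*} (P : PartialSemigroup S)
    (hAd : P.Adequate) (𝓕 : Set (Set S)) (hfin : ∀ F ∈ 𝓕, F.Finite)
    (hinv : P.Invariant 𝓕) (hpr : P.AdequatelyPartitionRegular 𝓕)
    (A : Set S) (hA : P.PiecewiseSyndetic A) :
    ∃ F ∈ 𝓕, F ⊆ A :=
  piecewise_syndetic_contains_member_general P 𝓕 hfin hinv hpr A hA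
end

section
/- Let (S, ·) be an adequate partial semigroup and let 𝓕 be an adequately partition regular invariant family of finite subsets of S. Then the set P = {p ∈ δS : every A ∈ p contains some F ∈ 𝓕} is a nonempty closed two-sided ideal of δS; in particular K(δS) ⊂ P. -/
open Set

/-!
Colour each point of `⋂_{x ∈ G} φ(x)` by which of finitely many `𝓕`-free sets contain it: a
monochromatic member of `𝓕` shows that some point avoids all of them. Hence the sets `φ(x)`
and the complements of `𝓕`-free sets have the finite intersection property, and an ultrafilter
containing them all lies in `P`. `P` is the intersection of basic closed sets of `βS`. It is a
left ideal since left translates of members of `𝓕` lie in `𝓕`; it is a right ideal since for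
`F ∈ 𝓕` with `F ⊆ {x : x⁻¹A ∈ p}` finiteness gives `⋂_{f ∈ F} f⁻¹A ∈ p`, so some `t` has
`F·t ⊆ A`. Every ideal contains `K(δS)`.
-/

theorem Option.forall_isSome_and_setOf_subset {α β : Type*} {g : α → Option β} {F : Set α}
    {A : Set β} (h : ∀ f ∈ F, ∃ z ∈ A, g f = some z) :
    (∀ f ∈ F, (g f).isSome) ∧ {z | ∃ f ∈ F, g f = some z} ⊆ A := by
  refine ⟨fun f hf => ?_, ?_⟩
  · obtain ⟨z, -, hz⟩ := h f hf
    simp [hz]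
  · rintro z ⟨f, hf, hz⟩
    obtain ⟨z', hz'A, hz'⟩ := h f hf
    rwa [Option.some_injective _ (hz.symm.trans hz')]

theorem isClosed_setOf_forall_mem_exists_subset {α : Type*} (𝓕 : Set (Set α)) :
    IsClosed {p : Ultrafilter α | ∀ A ∈ p, ∃ F ∈ 𝓕, F ⊆ A} := by
  simp only [ofPred_forall]
  refine isClosed_iInter fun A => ?_
  by_cases hA : ∃ F ∈ 𝓕, F ⊆ A
  · simp [hA]
  · simp only [hA, imp_false]
    exact (ultrafilter_isOpen_basic A).isClosed_compl

namespace PartialSemigroup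

variable {S : Type*} (P : PartialSemigroup S)

theorem assoc_of_op_op_eq_some {x s y w u : S} (hw : P.op x s = some w)
    (hu : P.op w y = some u) : ∃ v, P.op s y = some v ∧ P.op x v = some u := by
  have h := P.assoc x s y
  rw [hw, Option.bind_some, hu, eq_comm, Option.bind_eq_some_iff] at h
  exact h

theorem isClosed_delta : IsClosed P.delta := by
  simpa only [delta, ofPred_forall] using
    isClosed_iInter fun x => ultrafilter_isClosed_basic (P.phi x)

theorem nonempty_biInter_phi {𝓕 : Set (Set S)} (hAd : P.Adequate)
    (hpr : P.AdequatelyPartitionRegular 𝓕) (G : Finset S) : (⋂ x ∈ G, P.phi x).Nonempty := by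
  rcases G.eq_empty_or_nonempty with rfl | hG
  · simp only [Finset.notMem_empty, iInter_of_empty, iInter_univ, ← nonempty_iff_univ_nonempty,
      ← not_isEmpty_iff]
    intro hS
    obtain ⟨-, -, -, i, -⟩ := hpr ∅ 0 isEmptyElim
    exact i.elim0
  · exact hAd G hG

theorem exists_mem_biInter_phi_forall_notMem {𝓕 : Set (Set S)} (hAd : P.Adequate)
    (hpr : P.AdequatelyPartitionRegular 𝓕) (G : Finset S) (T : Finset (Set S))
    (hT : ∀ A ∈ T, ¬∃ F ∈ 𝓕, F ⊆ A) : ∃ y ∈ ⋂ x ∈ G, P.phi x, ∀ A ∈ T, y ∉ A := by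
  classical
  obtain ⟨F, hF, hFG, i, hi⟩ := hpr G _ fun y => Fintype.equivFin (Set T) {A | y ∈ A.1}
  rcases F.eq_empty_or_nonempty with rfl | ⟨f, hf⟩
  · obtain ⟨y, hy⟩ := P.nonempty_biInter_phi hAd hpr G
    exact ⟨y, hy, fun A hA => (hT A hA ⟨∅, hF, empty_subset A⟩).elim⟩
  · refine ⟨f, hFG hf, fun A hA hfA => hT A hA ⟨F, hF, fun g hg => ?_⟩⟩
    have hfg : {B : T | f ∈ B.1} = {B : T | g ∈ B.1} :=
      (Fintype.equivFin _).injective ((hi f hf).trans (hi g hg).symm)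
    exact (Set.ext_iff.mp hfg ⟨A, hA⟩).mp hfA

theorem exists_mem_delta_forall_mem_exists_subset {𝓕 : Set (Set S)} (hAd : P.Adequate)
    (hpr : P.AdequatelyPartitionRegular 𝓕) : ∃ p ∈ P.delta, ∀ A ∈ p, ∃ F ∈ 𝓕, F ⊆ A := by
  classical
  set 𝔅 := range P.phi ∪ compl '' {A | ¬∃ F ∈ 𝓕, F ⊆ A}
  have h𝔅 (T : Finset (Set S)) (hT : ↑T ⊆ 𝔅) : (⋂₀ (T : Set (Set S))).Nonempty := by
    obtain ⟨T₁, T₂, rfl, h₁, h₂⟩ := Finset.subset_union_elim hT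
    obtain ⟨G, -, rfl⟩ := Finset.subset_set_image_iff.mp (image_univ (f := P.phi) ▸ h₁)
    obtain ⟨B, hB, rfl⟩ := Finset.subset_set_image_iff.mp (h₂.trans sdiff_subset)
    obtain ⟨y, hyG, hyB⟩ := P.exists_mem_biInter_phi_forall_notMem hAd hpr G B hB
    refine ⟨y, ?_⟩
    simp only [Finset.coe_union, Finset.coe_image, sInter_union, sInter_image, mem_inter_iff]
    exact ⟨hyG, mem_iInter₂.mpr hyB⟩
  obtain ⟨p, hp⟩ := Ultrafilter.exists_ultrafilter_of_finite_inter_nonempty 𝔅 h𝔅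
  refine ⟨p, fun x => hp (Or.inl ⟨x, rfl⟩), fun A hA => ?_⟩
  by_contra hA𝓕
  exact Ultrafilter.compl_notMem_iff.mpr hA (hp (Or.inr ⟨A, hA𝓕, rfl⟩))

theorem exists_subset_of_mem_mulSets_left {𝓕 : Set (Set S)} (hinv : P.Invariant 𝓕)
    {p q : Ultrafilter S} (hq : ∀ A ∈ q, ∃ F ∈ 𝓕, F ⊆ A) {A : Set S}
    (hA : A ∈ P.mulSets p q) : ∃ F ∈ 𝓕, F ⊆ A := by
  obtain ⟨s, hs⟩ := Ultrafilter.nonempty_of_mem hA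
  obtain ⟨F, hF, hFs⟩ := hq _ hs
  obtain ⟨hdef, hsF⟩ := Option.forall_isSome_and_setOf_subset hFs
  exact ⟨_, hinv.1 s F hF hdef, hsF⟩

theorem exists_subset_of_mem_mulSets_right {𝓕 : Set (Set S)} (hinv : P.Invariant 𝓕)
    (hfin : ∀ F ∈ 𝓕, F.Finite) {p q : Ultrafilter S} (hq : ∀ A ∈ q, ∃ F ∈ 𝓕, F ⊆ A)
    {A : Set S} (hA : A ∈ P.mulSets q p) : ∃ F ∈ 𝓕, F ⊆ A := by
  obtain ⟨F, hF, hFA⟩ := hq _ hA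
  obtain ⟨t, ht⟩ := Ultrafilter.nonempty_of_mem ((Filter.biInter_mem (hfin F hF)).mpr hFA)
  obtain ⟨hdef, hFt⟩ := Option.forall_isSome_and_setOf_subset fun f hf => mem_iInter₂.mp ht f hf
  exact ⟨_, hinv.2 t F hF hdef, hFt⟩

end PartialSemigroup

/-- The set `P` of ultrafilters in `δS` all of whose members contain a member of
`𝓕` is a nonempty closed two-sided ideal of `δS`; in particular `K(δS) ⊆ P`. -/
theorem ideal_of_partition_regular_family {S : Type*} (P : PartialSemigroup S)
    (hAd : P.Adequate) (𝓕 : Set (Set S)) (hfin : ∀ F ∈ 𝓕, F.Finite)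
    (hinv : P.Invariant 𝓕) (hpr : P.AdequatelyPartitionRegular 𝓕) :
    let Pset : Set (Ultrafilter S) :=
      {p | p ∈ P.delta ∧ ∀ A ∈ p, ∃ F ∈ 𝓕, F ⊆ A}
    Pset.Nonempty ∧ IsClosed Pset ∧ P.IsIdeal Pset ∧
      ∀ p : Ultrafilter S, P.InSmallestIdeal p → p ∈ Pset := by
  intro Pset
  have hne : Pset.Nonempty := P.exists_mem_delta_forall_mem_exists_subset hAd hpr
  have hideal : P.IsIdeal Pset :=
    ⟨fun _ hp => hp.1, hne,
      fun _ hp _ hq _ hr => ⟨P.mem_delta_of_isProd hp hq.1 hr,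
        fun A hA => P.exists_subset_of_mem_mulSets_left hinv hq.2 ((hr A).1 hA)⟩,
      fun _ hp _ hq _ hr => ⟨P.mem_delta_of_isProd hq.1 hp hr,
        fun A hA => P.exists_subset_of_mem_mulSets_right hinv hfin hq.2 ((hr A).1 hA)⟩⟩
  exact ⟨hne, P.isClosed_delta.inter (isClosed_setOf_forall_mem_exists_subset 𝓕), hideal,
    fun p hp => hp.2 Pset hideal⟩
end

section
/- In a compact right topological semigroup T, for every idempotent f there exists a minimal idempotent e with e ≤ f, where e ≤ f means e·f = f·e = e. -/
/-- A compact right topological semigroup structure on a nonempty compact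
Hausdorff space `T`: an associative multiplication for which every right
translation `p ↦ p·q` is continuous. -/
structure CRTSemigroup (T : Type*) [TopologicalSpace T] where
  mul : T → T → T
  mul_assoc : ∀ p q r : T, mul (mul p q) r = mul p (mul q r)
  continuous_mul_right : ∀ q : T, Continuous (fun p => mul p q)

namespace CRTSemigroup

variable {T : Type*} [TopologicalSpace T] (M : CRTSemigroup T)

/-- `e` is idempotent: `e·e = e`. -/
def IsIdempotent (e : T) : Prop := M.mul e e = e

/-- The partial order on idempotents: `e ≤ f` iff `e·f = f·e = e`. -/
def le (e f : T) : Prop := M.mul e f = e ∧ M.mul f e = e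

/-- `e` is a minimal idempotent. -/
def IsMinimalIdempotent (e : T) : Prop :=
  M.IsIdempotent e ∧ ∀ f : T, M.IsIdempotent f → M.le f e → f = e

/-- A two-sided ideal of `T`. -/
def IsIdeal (I : Set T) : Prop :=
  I.Nonempty ∧ ∀ p : T, ∀ q ∈ I, M.mul p q ∈ I ∧ M.mul q p ∈ I

/-- Membership in the smallest two-sided ideal `K(T)` (which equals the
intersection of all two-sided ideals). -/
def InSmallestIdeal (p : T) : Prop := ∀ I : Set T, M.IsIdeal I → p ∈ I

end CRTSemigroup

/-- Below every idempotent of a compact right topological semigroup there is a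
minimal idempotent. -/
theorem exists_minimal_idempotent_le {T : Type*} [TopologicalSpace T]
    [CompactSpace T] [T2Space T] [Nonempty T] (M : CRTSemigroup T)
    (f : T) (hf : M.IsIdempotent f) :
    ∃ e : T, M.IsMinimalIdempotent e ∧ M.le e f := by
  classical
  letI : Semigroup T := { mul := M.mul, mul_assoc := M.mul_assoc }
  have hmul : ∀ p q : T, M.mul p q = p * q := fun _ _ => rfl
  have cont : ∀ q : T, Continuous (· * q) := M.continuous_mul_right
  -- the closed left ideal T·f
  set S0 : Set T := Set.range (· * f) with hS0
  have hS0comp : IsCompact S0 := isCompact_range (cont f)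
  have hfS0 : f ∈ S0 := ⟨f, hf⟩
  -- family of closed left ideals contained in S0
  set S : Set (Set T) :=
    { L | L.Nonempty ∧ IsClosed L ∧ L ⊆ S0 ∧ ∀ p q : T, q ∈ L → p * q ∈ L } with hS
  have hS0mem : S0 ∈ S := by
    refine ⟨⟨f, hfS0⟩, hS0comp.isClosed, subset_rfl, ?_⟩
    rintro p _ ⟨r, rfl⟩
    exact ⟨p * r, mul_assoc p r f⟩
  -- Zorn: a minimal element of S
  obtain ⟨L, hL⟩ : ∃ L, Minimal (· ∈ S) L := by
    refine zorn_superset _ fun c hcs hc => ?_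
    obtain rfl | hcne := c.eq_empty_or_nonempty
    · exact ⟨S0, hS0mem, by simp⟩
    refine ⟨⋂₀ c, ⟨?_, isClosed_sInter fun t ht => (hcs ht).2.1, ?_, ?_⟩,
      fun s hs => Set.sInter_subset_of_mem hs⟩
    · haveI := hcne.coe_sort
      have := IsCompact.nonempty_iInter_of_directed_nonempty_isCompact_isClosed
        (((↑) : c → Set T))
        (DirectedOn.directed_val (IsChain.directedOn hc.symm))
        (fun i => (hcs i.prop).1)
        (fun i => ((hcs i.prop).2.1).isCompact)
        (fun i => (hcs i.prop).2.1)
      rwa [Set.sInter_eq_iInter]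
    · obtain ⟨t, ht⟩ := hcne
      exact (Set.sInter_subset_of_mem ht).trans (hcs ht).2.2.1
    · intro p q hq
      rw [Set.mem_sInter] at hq ⊢
      exact fun t ht => (hcs ht).2.2.2 p q (hq t ht)
  obtain ⟨⟨hLne, hLcl, hLS0, hLideal⟩, hLmin⟩ := hL
  -- every x ∈ L satisfies x * f = x
  have habs : ∀ x ∈ L, x * f = x := by
    rintro x hx
    obtain ⟨p, rfl⟩ := hLS0 hx
    show p * f * f = p * f
    rw [mul_assoc, show f * f = f from hf]
  -- L is a compact subsemigroup; Ellis gives an idempotent e ∈ L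
  obtain ⟨e, heL, hee⟩ := exists_idempotent_in_compact_subsemigroup cont L hLne
    hLcl.isCompact (fun x hx y hy => hLideal x y hy)
  -- set g = f * e
  set g : T := f * e with hg
  have hgL : g ∈ L := hLideal f e heL
  have hef : e * f = e := habs e heL
  have hff : f * f = f := hf
  have hgg : g * g = g := by
    show f * e * (f * e) = f * e
    rw [mul_assoc, ← mul_assoc e f e, hef, hee]
  have hgf : g * f = g := by
    show f * e * f = f * e
    rw [mul_assoc, hef]
  have hfg : f * g = g := by
    show f * (f * e) = f * e
    rw [← mul_assoc, hff]
  refine ⟨g, ⟨hgg, ?_⟩, hgf, hfg⟩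
  -- minimality of g
  intro h hh hhg
  obtain ⟨hhg1, hhg2⟩ := hhg
  rw [hmul] at hhg1 hhg2
  have hhL : h ∈ L := hhg1 ▸ hLideal h g hgL
  -- T·h is a closed left ideal inside L, hence equals L
  have hThS : Set.range (· * h) ∈ S := by
    refine ⟨⟨h, h, show h * h = h from hh⟩, (isCompact_range (cont h)).isClosed, ?_, ?_⟩
    · rintro _ ⟨p, rfl⟩
      exact hLS0 (hLideal p h hhL)
    · rintro p _ ⟨r, rfl⟩
      exact ⟨p * r, mul_assoc p r h⟩
  have hThL : Set.range (· * h) ⊆ L := by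
    rintro _ ⟨p, rfl⟩
    exact hLideal p h hhL
  have hLTh : L ⊆ Set.range (· * h) := hLmin hThS hThL
  obtain ⟨t, ht⟩ := hLTh hgL
  have : g * h = g := by
    rw [← ht, mul_assoc]
    show t * (h * h) = t * h
    rw [show h * h = h from hh]
  rw [← hhg2, this]
end

section
/- Let Σ be a finite alphabet, v ∉ Σ, and let e be a minimal idempotent of δL(Σ). Then M = {p ∈ δL(Σ ∪ {v}) : θ̃_s(p) = e for all s ∈ Σ} is a nonempty closed subsemigroup of δL(Σ ∪ {v}), and every minimal idempotent of M is a minimal idempotent of δL(Σ ∪ {v}). -/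
/-!
Both `θ_s` and the inclusion `ι : L(Σ) → L(Σ ∪ {v})` act letter by letter, so they preserve
domains and `⊎`; hence their extensions to ultrafilters preserve products, idempotents, the order
`≤` and membership in `δ`. Thus `ι̃(e) ∈ M`, `M` is an intersection of basic closed sets, and
`θ̃_s(p·q) = e·e = e` for `p, q ∈ M`. If `q` is minimal in `M` and `f ≤ q` is an idempotent of
`δL(Σ ∪ {v})`, then `θ̃_s(f) ≤ θ̃_s(q) = e` is an idempotent of `δL(Σ)`, so `θ̃_s(f) = e` by
minimality of `e`; hence `f ∈ M` and `f = q`.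
-/

open scoped Classical

/-- Located words over alphabet `τ`, as functions `ℕ → Option τ`. -/
abbrev Word (τ : Type*) := ℕ → Option τ

def wDom {τ : Type*} (f : Word τ) : Set ℕ := {n | f n ≠ none}

def IsWord {τ : Type*} (f : Word τ) : Prop := (wDom f).Finite ∧ (wDom f).Nonempty

/-- The union of two located words. -/
def wUnion {τ : Type*} (f g : Word τ) : Word τ := fun n => (f n).elim (g n) some

/-- The partial semigroup operation `⊎` on located words: defined exactly for
located words with disjoint domains. -/
noncomputable def wOp {τ : Type*} (f g : Word τ) : Option (Word τ) :=
  if IsWord f ∧ IsWord g ∧ Disjoint (wDom f) (wDom g) then some (wUnion f g) else none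

/-- `φ(x) = {y : x ⊎ y is defined}`. -/
def phi {τ : Type*} (x : Word τ) : Set (Word τ) := {y | (wOp x y).isSome}

/-- `x⁻¹A = {y ∈ φ(x) : x ⊎ y ∈ A}`. -/
def invImg {τ : Type*} (x : Word τ) (A : Set (Word τ)) : Set (Word τ) :=
  {y | ∃ z ∈ A, wOp x y = some z}

/-- The sets of the ultrafilter product `p·q = {A : {x : x⁻¹A ∈ q} ∈ p}`. -/
def mulSets {τ : Type*} (p q : Ultrafilter (Word τ)) : Set (Set (Word τ)) :=
  {A | {x | invImg x A ∈ q} ∈ p}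

/-- `r` is the product `p·q` in `δL(τ)`. -/
def IsProd {τ : Type*} (p q r : Ultrafilter (Word τ)) : Prop :=
  ∀ A : Set (Word τ), A ∈ r ↔ A ∈ mulSets p q

/-- `δL(τ) ⊆ βL(τ)`: ultrafilters containing `φ(x)` for every located word `x`. -/
def delta (τ : Type*) : Set (Ultrafilter (Word τ)) :=
  {p | ∀ x : Word τ, IsWord x → phi x ∈ p}

/-- `q` is an idempotent: `q·q = q`. -/
def IsIdem {τ : Type*} (q : Ultrafilter (Word τ)) : Prop := IsProd q q q

/-- `e ≤ f` iff `e·f = f·e = e`. -/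
def uLe {τ : Type*} (e f : Ultrafilter (Word τ)) : Prop :=
  IsProd e f e ∧ IsProd f e e

/-- The alphabet `Σ ∪ {v}`; the variable `v` is `Sum.inr ()`. -/
abbrev VLetter (σ : Type*) := σ ⊕ Unit

def vLet {σ : Type*} : VLetter σ := Sum.inr ()

/-- The variable `v` occurs in `f`. -/
def vOccurs {σ : Type*} (f : Word (VLetter σ)) : Prop := ∃ n, f n = some vLet

/-- The substitution map `θ_s`: replace every occurrence of `v` by `s`. -/
def theta {σ : Type*} (s : σ) (f : Word (VLetter σ)) : Word σ :=
  fun n => (f n).map (fun a => Sum.elim id (fun _ => s) a)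

def wMap {τ τ' : Type*} (g : τ → τ') (f : Word τ) : Word τ' := fun n => (f n).map g

section Words

variable {τ τ' : Type*}

lemma mem_phi {x y : Word τ} :
    y ∈ phi x ↔ IsWord x ∧ IsWord y ∧ Disjoint (wDom x) (wDom y) := by
  by_cases h : IsWord x ∧ IsWord y ∧ Disjoint (wDom x) (wDom y) <;> simp [phi, wOp, h]

lemma wOp_of_mem_phi {x y : Word τ} (h : y ∈ phi x) : wOp x y = some (wUnion x y) :=
  if_pos (mem_phi.1 h)

lemma wDom_wUnion (f g : Word τ) : wDom (wUnion f g) = wDom f ∪ wDom g := by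
  ext n; cases h : f n <;> simp [wDom, wUnion, h]

lemma IsWord.wUnion {f g : Word τ} (hf : IsWord f) (hg : IsWord g) : IsWord (wUnion f g) := by
  rw [IsWord, wDom_wUnion]
  exact ⟨hf.1.union hg.1, hf.2.mono Set.subset_union_left⟩

/-- If `(x ⊎ y) ⊎ z` is defined, then so is `x ⊎ (y ⊎ z)`. -/
lemma phi_wUnion_subset_invImg_phi {x y : Word τ} (hy : y ∈ phi x) :
    phi (wUnion x y) ⊆ invImg y (phi x) := by
  intro z hz
  obtain ⟨hx, hy, hxy⟩ := mem_phi.1 hy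
  obtain ⟨-, hz, hxyz⟩ := mem_phi.1 hz
  rw [wDom_wUnion, Set.disjoint_union_left] at hxyz
  have hyz : z ∈ phi y := mem_phi.2 ⟨hy, hz, hxyz.2⟩
  refine ⟨wUnion y z, mem_phi.2 ⟨hx, hy.wUnion hz, ?_⟩, wOp_of_mem_phi hyz⟩
  rw [wDom_wUnion]
  exact Set.disjoint_union_right.2 ⟨hxy, hxyz.1⟩

lemma wDom_wMap (g : τ → τ') (f : Word τ) : wDom (wMap g f) = wDom f := by
  ext n; simp [wDom, wMap]

lemma isWord_wMap_iff (g : τ → τ') {f : Word τ} : IsWord (wMap g f) ↔ IsWord f := by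
  rw [IsWord, IsWord, wDom_wMap]

lemma wMap_wUnion (g : τ → τ') (f f' : Word τ) :
    wMap g (wUnion f f') = wUnion (wMap g f) (wMap g f') := by
  funext n; cases h : f n <;> simp [wMap, wUnion, h]

lemma wOp_wMap (g : τ → τ') (f f' : Word τ) :
    wOp (wMap g f) (wMap g f') = (wOp f f').map (wMap g) := by
  simp only [wOp, isWord_wMap_iff, wDom_wMap]
  split_ifs <;> simp [wMap_wUnion]

lemma preimage_invImg_wMap (g : τ → τ') (x : Word τ) (A : Set (Word τ')) :
    wMap g ⁻¹' invImg (wMap g x) A = invImg x (wMap g ⁻¹' A) := by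
  ext y
  simp only [Set.mem_preimage, invImg, Set.mem_ofPred_eq, wOp_wMap]
  cases wOp x y <;> simp

lemma wMap_comp_wMap {τ'' : Type*} (g : τ' → τ'') (h : τ → τ') :
    wMap g ∘ wMap h = wMap (g ∘ h) := by
  funext f n; simp [wMap, Option.map_map]

lemma wMap_id : wMap (id : τ → τ) = id := by
  funext f n; simp [wMap]

end Words

section Ultrafilters

variable {τ τ' : Type*} {p q r : Ultrafilter (Word τ)}

lemma IsProd.unique {r' : Ultrafilter (Word τ)} (h : IsProd p q r) (h' : IsProd p q r') :
    r = r' :=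
  Ultrafilter.coe_injective <| Filter.ext fun A => (h A).trans (h' A).symm

lemma isClosed_delta : IsClosed (delta τ) := by
  simp only [delta, Set.ofPred_forall]
  exact isClosed_iInter fun x => isClosed_iInter fun _ => ultrafilter_isClosed_basic (phi x)

lemma IsProd.mem_delta (hp : p ∈ delta τ) (hq : q ∈ delta τ) (h : IsProd p q r) :
    r ∈ delta τ := by
  intro x hx
  rw [h]
  refine p.mem_of_superset (hp x hx) fun y hy => ?_
  exact q.mem_of_superset (hq _ ((mem_phi.1 hy).1.wUnion (mem_phi.1 hy).2.1))
    (phi_wUnion_subset_invImg_phi hy)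

lemma IsProd.map_wMap (g : τ → τ') (h : IsProd p q r) :
    IsProd (p.map (wMap g)) (q.map (wMap g)) (r.map (wMap g)) := by
  intro A
  rw [Ultrafilter.mem_map, h]
  simp only [mulSets, Set.mem_ofPred_eq, Set.preimage_ofPred_eq, Ultrafilter.mem_map,
    preimage_invImg_wMap]

lemma IsIdem.map_wMap (g : τ → τ') (h : IsIdem q) : IsIdem (q.map (wMap g)) :=
  IsProd.map_wMap g h

lemma uLe.map_wMap (g : τ → τ') (h : uLe p q) : uLe (p.map (wMap g)) (q.map (wMap g)) :=
  ⟨h.1.map_wMap g, h.2.map_wMap g⟩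

/-- Nonemptiness of `τ` lets every located word over `τ'` be copied, letter by letter, to one
over `τ` with the same domain. -/
lemma map_wMap_mem_delta [Nonempty τ] (g : τ → τ') (hp : p ∈ delta τ) :
    p.map (wMap g) ∈ delta τ' := by
  intro x' hx'
  let x : Word τ := wMap (fun _ => Classical.arbitrary τ) x'
  have hdom : wDom x = wDom x' := wDom_wMap _ x'
  have hphi : wMap g ⁻¹' phi x' = phi x := by
    ext y
    simp only [Set.mem_preimage, mem_phi, wDom_wMap, IsWord, hdom]
  rw [Ultrafilter.mem_map, hphi]
  exact hp x (by rw [IsWord, hdom]; exact hx')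

end Ultrafilters

lemma isClosed_setOf_map_eq {α β : Type*} (m : α → β) (e : Ultrafilter β) :
    IsClosed {p : Ultrafilter α | p.map m = e} := by
  have h : {p : Ultrafilter α | p.map m = e} = ⋂ A ∈ e, {p | m ⁻¹' A ∈ p} := by
    ext p
    simp only [Set.mem_ofPred_eq, Set.mem_iInter]
    exact ⟨fun hp A hA => by rwa [← Ultrafilter.mem_map, hp],
      fun hp => Ultrafilter.eq_of_le fun A hA => hp A hA⟩
  rw [h]
  exact isClosed_biInter fun A _ => ultrafilter_isClosed_basic _

lemma theta_eq_wMap {σ : Type*} (s : σ) : theta s = wMap (Sum.elim id fun _ => s) := rfl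

lemma theta_comp_wMap_inl {σ : Type*} (s : σ) : theta s ∘ wMap Sum.inl = id := by
  rw [theta_eq_wMap, wMap_comp_wMap, Sum.elim_comp_inl, wMap_id]

theorem M_closed_subsemigroup_minimal_general {σ : Type} [Nonempty σ]
    (e : Ultrafilter (Word σ)) (he : e ∈ delta σ) (heIdem : IsIdem e)
    (heMin : ∀ f ∈ delta σ, IsIdem f → uLe f e → f = e) :
    let M : Set (Ultrafilter (Word (VLetter σ))) :=
      {p | p ∈ delta (VLetter σ) ∧ ∀ s : σ, Ultrafilter.map (theta s) p = e}
    M.Nonempty ∧ IsClosed M ∧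
      (∀ p ∈ M, ∀ q ∈ M, ∀ r : Ultrafilter (Word (VLetter σ)),
        IsProd p q r → r ∈ M) ∧
      (∀ q ∈ M, IsIdem q → (∀ f ∈ M, IsIdem f → uLe f q → f = q) →
        q ∈ delta (VLetter σ) ∧ IsIdem q ∧
          ∀ f ∈ delta (VLetter σ), IsIdem f → uLe f q → f = q) := by
  intro M
  refine ⟨⟨e.map (wMap Sum.inl), map_wMap_mem_delta _ he, fun s => ?_⟩, ?_, ?_, ?_⟩
  · rw [Ultrafilter.map_map, theta_comp_wMap_inl, Ultrafilter.map_id]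
  · have hθ : IsClosed {p : Ultrafilter _ | ∀ s : σ, p.map (theta s) = e} := by
      simpa only [Set.ofPred_forall] using isClosed_iInter fun s => isClosed_setOf_map_eq _ e
    exact isClosed_delta.inter hθ
  · rintro p ⟨hp, hpe⟩ q ⟨hq, hqe⟩ r hr
    refine ⟨hr.mem_delta hp hq, fun s => ?_⟩
    have hθ := hr.map_wMap (Sum.elim id fun _ => s)
    rw [← theta_eq_wMap, hpe, hqe] at hθ
    exact hθ.unique heIdem
  · rintro q ⟨hq, hqe⟩ hqIdem hqMin
    refine ⟨hq, hqIdem, fun f hf hfIdem hfq => hqMin f ⟨hf, fun s => ?_⟩ hfIdem hfq⟩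
    have hθ := hfq.map_wMap (Sum.elim id fun _ => s)
    rw [← theta_eq_wMap, hqe] at hθ
    exact heMin _ (map_wMap_mem_delta _ hf) (hfIdem.map_wMap _) hθ

/-- Given a minimal idempotent `e` of `δL(Σ)`, the set
`M = {p ∈ δL(Σ ∪ {v}) : θ̃_s(p) = e for all s ∈ Σ}` (where `θ̃_s` is the
continuous extension `Ultrafilter.map (θ_s)`) is a nonempty closed
subsemigroup of `δL(Σ ∪ {v})`, and every minimal idempotent of `M` is a
minimal idempotent of `δL(Σ ∪ {v})`. -/
theorem M_closed_subsemigroup_minimal {σ : Type} [Fintype σ] [Nonempty σ]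
    (e : Ultrafilter (Word σ)) (he : e ∈ delta σ) (heIdem : IsIdem e)
    (heMin : ∀ f ∈ delta σ, IsIdem f → uLe f e → f = e) :
    let M : Set (Ultrafilter (Word (VLetter σ))) :=
      {p | p ∈ delta (VLetter σ) ∧ ∀ s : σ, Ultrafilter.map (theta s) p = e}
    M.Nonempty ∧ IsClosed M ∧
      (∀ p ∈ M, ∀ q ∈ M, ∀ r : Ultrafilter (Word (VLetter σ)),
        IsProd p q r → r ∈ M) ∧
      (∀ q ∈ M, IsIdem q → (∀ f ∈ M, IsIdem f → uLe f q → f = q) →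
        q ∈ delta (VLetter σ) ∧ IsIdem q ∧
          ∀ f ∈ delta (VLetter σ), IsIdem f → uLe f q → f = q) :=
  M_closed_subsemigroup_minimal_general e he heIdem heMin
end

section
/- There exist K₀ ∈ ℕ and, for every K ≥ K₀, positive integers A, D and a partition {(A+iD)^j : i, j ∈ {0,…,K}} = B₁ ∪ B₂ such that neither B₁ nor B₂ contains a set of the form {b·(a+i·d)^j : i ∈ {0,1,2}, j ∈ {0,1}} with a, b, d ∈ ℕ. -/
/-!
Take `A = K + 1`, `D = 2 K² A^K + 1` and split the set into the linear terms `A + i D` and the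
remaining powers. A configuration in the linear cell gives `b d = (i₁ - i₀) D` with
`b = A + t D` coprime to `D` and `b > K ≥ |i₁ - i₀|`, so `d = 0`. A configuration in the other
cell contains a progression `x + z = 2 y` of powers `(A + i D) ^ j`. Modulo `D` these are the
small numbers `A ^ j`, which forces equal exponents; modulo `D²` the first-order terms
`j A^(j-1) i D` force the bases into arithmetic progression; strict convexity of `t ↦ t ^ j`
then rules the progression out.
-/

lemma Nat.eq_of_pow_add_pow_eq_two_mul_pow {A p q r : ℕ} (hA : 2 ≤ A)
    (h : A ^ p + A ^ q = 2 * A ^ r) : p = r ∧ q = r := by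
  wlog hpq : p ≤ q generalizing p q
  · exact (this (by omega) (by omega)).symm
  have hinj := Nat.pow_right_injective hA
  rcases hpq.eq_or_lt with rfl | hpq
  · have : A ^ p = A ^ r := by omega
    exact ⟨hinj this, hinj this⟩
  exfalso
  have hlt : A ^ p < A ^ q := Nat.pow_lt_pow_right hA hpq
  rcases lt_or_ge r q with hrq | hqr
  · have : 2 * A ^ r ≤ A ^ q :=
      calc 2 * A ^ r ≤ A * A ^ r := Nat.mul_le_mul_right _ hA
        _ = A ^ (r + 1) := by ring
        _ ≤ A ^ q := Nat.pow_le_pow_right (by omega) hrq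
    linarith [Nat.pow_pos (n := p) (show 0 < A by omega)]
  · have : A ^ q ≤ A ^ r := Nat.pow_le_pow_right (by omega) hqr
    linarith

lemma two_mul_pow_lt_pow_add_pow {u v w j : ℕ} (huw : u < w) (hv : u + w = 2 * v)
    (hj : 2 ≤ j) : 2 * v ^ j < u ^ j + w ^ j := by
  have hv_real : (u : ℝ) + w = 2 * v := by exact_mod_cast hv
  have hv' : (v : ℝ) = (1 / 2 : ℝ) • (u : ℝ) + (1 / 2 : ℝ) • (w : ℝ) := by
    simp only [smul_eq_mul]
    linarith
  have := (strictConvexOn_pow hj).2 (Set.mem_Ici.2 u.cast_nonneg) (Set.mem_Ici.2 w.cast_nonneg)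
    (by exact_mod_cast huw.ne) (by norm_num : (0 : ℝ) < 1 / 2) (by norm_num : (0 : ℝ) < 1 / 2)
    (by norm_num)
  rw [← hv'] at this
  simp only [smul_eq_mul] at this
  exact_mod_cast (by linarith : 2 * (v : ℝ) ^ j < (u : ℝ) ^ j + (w : ℝ) ^ j)

lemma Int.dvd_of_add_mul_pow_add_eq_two_mul {A D i₀ i₁ i₂ : ℤ} {j : ℕ} (hD : D ≠ 0)
    (h : (A + i₀ * D) ^ j + (A + i₂ * D) ^ j = 2 * (A + i₁ * D) ^ j) :
    D ∣ j * A ^ (j - 1) * (i₀ + i₂ - 2 * i₁) := by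
  have taylor (i : ℤ) : D ^ 2 ∣ (A + i * D) ^ j - A ^ (j - 1) * (i * D) * j - A ^ j :=
    (pow_dvd_pow_of_dvd (dvd_mul_left D i) 2).trans (sq_dvd_add_pow_sub_sub (i * D) A j)
  obtain ⟨c₀, hc₀⟩ := taylor i₀
  obtain ⟨c₁, hc₁⟩ := taylor i₁
  obtain ⟨c₂, hc₂⟩ := taylor i₂
  refine (mul_dvd_mul_iff_right hD).1 ⟨-(c₀ + c₂ - 2 * c₁), ?_⟩
  linear_combination h - hc₀ - hc₂ + 2 * hc₁

lemma add_mul_pow_modEq (A i D j : ℕ) : (A + i * D) ^ j ≡ A ^ j [MOD D] :=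
  Nat.ModEq.pow j (Nat.add_mul_mod_self_right A i D)

def linearCell (A D K : ℕ) : Set ℕ := {n | ∃ i ≤ K, n = A + i * D}

def nonlinearCell (A D K : ℕ) : Set ℕ :=
  {n | ∃ i j, i ≤ K ∧ j ≤ K ∧ j ≠ 1 ∧ n = (A + i * D) ^ j}

lemma nonlinearCell_union_linearCell {A D K : ℕ} (hK : 1 ≤ K) :
    nonlinearCell A D K ∪ linearCell A D K =
      {n | ∃ i j : ℕ, i ≤ K ∧ j ≤ K ∧ n = (A + i * D) ^ j} := by
  ext n
  simp only [nonlinearCell, linearCell, Set.mem_union, Set.mem_ofPred_eq]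
  constructor
  · rintro (⟨i, j, hi, hj, -, rfl⟩ | ⟨i, hi, rfl⟩)
    exacts [⟨i, j, hi, hj, rfl⟩, ⟨i, 1, hi, hK, (pow_one _).symm⟩]
  · rintro ⟨i, j, hi, hj, rfl⟩
    obtain rfl | hj1 := eq_or_ne j 1
    exacts [Or.inr ⟨i, hi, pow_one _⟩, Or.inl ⟨i, j, hi, hj, hj1, rfl⟩]

section cells

variable {A D K : ℕ}

lemma nonlinearCell_inter_linearCell (hA : 2 ≤ A) (hK : 1 ≤ K) (hD : A ^ K < D) :
    nonlinearCell A D K ∩ linearCell A D K = ∅ := by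
  refine Set.eq_empty_of_forall_notMem ?_
  rintro _ ⟨⟨i, j, hi, hj, hj1, rfl⟩, i', -, hEq⟩
  have hpow {k : ℕ} (hk : k ≤ K) : A ^ k < D :=
    (Nat.pow_le_pow_right (by omega) hk).trans_lt hD
  have hmod : A ^ j ≡ A ^ 1 [MOD D] :=
    calc A ^ j ≡ (A + i * D) ^ j [MOD D] := (add_mul_pow_modEq A i D j).symm
      _ = (A + i' * D) ^ 1 := by rw [hEq, pow_one]
      _ ≡ A ^ 1 [MOD D] := add_mul_pow_modEq A i' D 1
  exact hj1 (Nat.pow_right_injective hA (hmod.eq_of_lt_of_lt (hpow hj) (hpow hK)))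

lemma exponents_eq_of_pow_add_pow_eq_two_mul_pow (hA : 2 ≤ A) (hD : 2 * A ^ K < D)
    {i₀ i₁ i₂ j₀ j₁ j₂ : ℕ} (hj₀ : j₀ ≤ K) (hj₁ : j₁ ≤ K) (hj₂ : j₂ ≤ K)
    (h : (A + i₀ * D) ^ j₀ + (A + i₂ * D) ^ j₂ = 2 * (A + i₁ * D) ^ j₁) :
    j₀ = j₁ ∧ j₂ = j₁ := by
  have hpow {k : ℕ} (hk : k ≤ K) : A ^ k ≤ A ^ K := Nat.pow_le_pow_right (by omega) hk
  refine Nat.eq_of_pow_add_pow_eq_two_mul_pow hA (Nat.ModEq.eq_of_lt_of_lt (m := D) ?_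
    (by linarith [hpow hj₀, hpow hj₂]) (by linarith [hpow hj₁]))
  calc A ^ j₀ + A ^ j₂ ≡ (A + i₀ * D) ^ j₀ + (A + i₂ * D) ^ j₂ [MOD D] :=
        ((add_mul_pow_modEq A i₀ D j₀).add (add_mul_pow_modEq A i₂ D j₂)).symm
    _ = 2 * (A + i₁ * D) ^ j₁ := h
    _ ≡ 2 * A ^ j₁ [MOD D] := (add_mul_pow_modEq A i₁ D j₁).mul_left 2

lemma add_eq_two_mul_of_pow_add_pow_eq_two_mul_pow (hA : 1 ≤ A) (hD : 2 * K ^ 2 * A ^ K < D)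
    {i₀ i₁ i₂ j : ℕ} (hi₀ : i₀ ≤ K) (hi₁ : i₁ ≤ K) (hi₂ : i₂ ≤ K) (hj : j ≤ K) (hj0 : j ≠ 0)
    (h : (A + i₀ * D) ^ j + (A + i₂ * D) ^ j = 2 * (A + i₁ * D) ^ j) :
    i₀ + i₂ = 2 * i₁ := by
  have hdvd := Int.dvd_of_add_mul_pow_add_eq_two_mul (A := A) (D := D) (i₀ := i₀) (i₁ := i₁)
    (i₂ := i₂) (j := j) (by omega) (by exact_mod_cast h)
  have hbound : |(j : ℤ) * A ^ (j - 1) * (i₀ + i₂ - 2 * i₁)| < D := by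
    rw [abs_mul, abs_mul, abs_of_nonneg (by positivity), abs_of_nonneg (by positivity)]
    have hjK : (j : ℤ) ≤ K := by exact_mod_cast hj
    have hA1 : (1 : ℤ) ≤ A := by exact_mod_cast hA
    have hj1K : j - 1 ≤ K := by omega
    have habs : |(i₀ : ℤ) + i₂ - 2 * i₁| ≤ 2 * K := abs_le.2 ⟨by omega, by omega⟩
    calc (j : ℤ) * A ^ (j - 1) * |(i₀ : ℤ) + i₂ - 2 * i₁| ≤ K * A ^ K * (2 * K) := by gcongr
      _ = (2 * K ^ 2 * A ^ K : ℕ) := by push_cast; ring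
      _ < D := by exact_mod_cast hD
  have := Int.eq_zero_of_abs_lt_dvd hdvd hbound
  simp only [mul_eq_zero, Nat.cast_eq_zero, hj0, pow_eq_zero_iff', false_or] at this
  omega

lemma nonlinearCell_not_add_eq_two_mul (hA : 2 ≤ A) (hK : 1 ≤ K) (hD : 2 * K ^ 2 * A ^ K < D)
    {x y z : ℕ} (hx : x ∈ nonlinearCell A D K) (hy : y ∈ nonlinearCell A D K)
    (hz : z ∈ nonlinearCell A D K) (hxy : x < y) (hsum : x + z = 2 * y) : False := by
  obtain ⟨i₀, j₀, hi₀, hj₀, -, rfl⟩ := hx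
  obtain ⟨i₁, j, hi₁, hj, hj1, rfl⟩ := hy
  obtain ⟨i₂, j₂, hi₂, hj₂, -, rfl⟩ := hz
  have hAK : 2 * A ^ K < D := by
    have : 1 ≤ K ^ 2 := Nat.one_le_pow _ _ hK
    nlinarith
  obtain ⟨hj₀j, hj₂j⟩ := exponents_eq_of_pow_add_pow_eq_two_mul_pow hA hAK hj₀ hj hj₂ hsum
  subst j₀ j₂
  have hj0 : j ≠ 0 := by
    rintro rfl
    simp at hxy
  have hlin := add_eq_two_mul_of_pow_add_pow_eq_two_mul_pow (by omega) hD hi₀ hi₁ hi₂ hj hj0 hsum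
  have hbases : (A + i₀ * D) + (A + i₂ * D) = 2 * (A + i₁ * D) := by
    rw [show (A + i₀ * D) + (A + i₂ * D) = 2 * A + (i₀ + i₂) * D by ring, hlin]
    ring
  have hlt : A + i₀ * D < A + i₂ * D := by
    have := (Nat.pow_lt_pow_iff_left hj0).1 hxy
    omega
  exact (two_mul_pow_lt_pow_add_pow hlt hbases (by omega)).ne' hsum

lemma eq_zero_of_mem_linearCell (hAD : A.Coprime D) (hKA : K < A) {a b d : ℕ}
    (hb : b ∈ linearCell A D K) (hba : b * a ∈ linearCell A D K)
    (hbad : b * (a + d) ∈ linearCell A D K) : d = 0 := by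
  obtain ⟨t, -, rfl⟩ := hb
  obtain ⟨i₀, hi₀, h₀⟩ := hba
  obtain ⟨i₁, hi₁, h₁⟩ := hbad
  have hcop : IsCoprime ((A + t * D : ℕ) : ℤ) D :=
    Nat.isCoprime_iff_coprime.2 ((Nat.coprime_add_mul_right_left A D t).2 hAD)
  zify at h₀ h₁
  have hdvd : ((A + t * D : ℕ) : ℤ) ∣ i₁ - i₀ :=
    hcop.dvd_of_dvd_mul_right ⟨d, by push_cast; linear_combination h₀ - h₁⟩
  have htD : (0 : ℤ) ≤ t * D := by positivity
  have hi : (i₁ : ℤ) - i₀ = 0 :=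
    Int.eq_zero_of_abs_lt_dvd hdvd (abs_lt.2 ⟨by push_cast; linarith, by push_cast; linarith⟩)
  have hbd : ((A : ℤ) + t * D) * d = 0 := by linear_combination h₁ - h₀ + D * hi
  have hbpos : (0 : ℤ) < A + t * D := by omega
  exact_mod_cast (mul_eq_zero.1 hbd).resolve_left hbpos.ne'

end cells

/-- Beiglböck–Bergelson–Hindman–Strauss, Theorem 4.9: configurations
`{(A+iD)^j : i, j ≤ K}` are not unbreakable.  There is `K₀` such that for every
`K ≥ K₀` one can find `A, D` and a two-cell partition of
`{(A+iD)^j : i, j ∈ {0,…,K}}` neither cell of which contains a configuration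
`{b·(a+i·d)^j : i ∈ {0,1,2}, j ∈ {0,1}}`. -/
theorem not_unbreakable :
    ∃ K₀ : ℕ, ∀ K : ℕ, K₀ ≤ K → ∃ A D : ℕ, 0 < A ∧ 0 < D ∧
      ∃ B₁ B₂ : Set ℕ,
        B₁ ∪ B₂ = {n | ∃ i j : ℕ, i ≤ K ∧ j ≤ K ∧ n = (A + i * D) ^ j} ∧
        B₁ ∩ B₂ = ∅ ∧
        ∀ B ∈ ({B₁, B₂} : Set (Set ℕ)),
          ¬ ∃ a b d : ℕ, 0 < a ∧ 0 < b ∧ 0 < d ∧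
            ∀ i j : ℕ, i ≤ 2 → j ≤ 1 → b * (a + i * d) ^ j ∈ B := by
  refine ⟨1, fun K hK => ?_⟩
  set D := 2 * K ^ 2 * (K + 1) ^ K + 1
  have hA : 2 ≤ K + 1 := by omega
  have hAK : (K + 1) ^ K < D := Nat.lt_succ_of_le (Nat.le_mul_of_pos_left _ (by positivity))
  have hcop : (K + 1).Coprime D :=
    ((Nat.coprime_mul_right_add_right _ 1 _).2 (Nat.coprime_one_right _)).coprime_dvd_left
      (dvd_pow_self _ (by omega))
  refine ⟨K + 1, D, by omega, by omega, nonlinearCell _ _ K, linearCell _ _ K,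
    nonlinearCell_union_linearCell hK, nonlinearCell_inter_linearCell hA hK hAK, ?_⟩
  rintro B (rfl | rfl) ⟨a, b, d, -, hb, hd, hcfg⟩
  · refine nonlinearCell_not_add_eq_two_mul hA hK (Nat.lt_succ_self _)
      (by simpa using hcfg 0 1) (by simpa using hcfg 1 1) (by simpa using hcfg 2 1) ?_ (by ring)
    exact Nat.mul_lt_mul_of_pos_left (by omega) hb
  · exact hd.ne' (eq_zero_of_mem_linearCell hcop K.lt_succ_self (by simpa using hcfg 0 0)
      (by simpa using hcfg 0 1) (by simpa using hcfg 1 1))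
end
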